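/- arXiv:1905.05450 — 4 statements merged into one kernel-verified Lean document; each statement's English description precedes it below -/
import Mathlib

section
/- The function g(x) = (x/(1+x))·(1/(1+x))^(1/x) is strictly increasing on (0, ∞); that is, for all real numbers 0 < x < y, (x/(1+x))·(1/(1+x))^(1/x) < (y/(1+y))·(1/(1+y))^(1/y). -/
/-!
The logarithm of the revenue `x / (1 + x) * (1 / (1 + x)) ^ (1 / x)` is
`log x - (1 + x⁻¹) * log (1 + x)`, whose derivative simplifies to `log (1 + x) / x ^ 2 > 0`.
-/

open Real Set

noncomputable def maxFixedPriceRevenue (x : ℝ) : ℝ :=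
  x / (1 + x) * (1 / (1 + x)) ^ (1 / x)

noncomputable def logMaxFixedPriceRevenue (x : ℝ) : ℝ :=
  log x - (1 + x⁻¹) * log (1 + x)

lemma exp_logMaxFixedPriceRevenue {x : ℝ} (hx : 0 < x) :
    exp (logMaxFixedPriceRevenue x) = maxFixedPriceRevenue x := by
  have h1x : 0 < 1 + x := by linarith
  have hratio : x / (1 + x) = exp (log x - log (1 + x)) := by
    rw [exp_sub, exp_log hx, exp_log h1x]
  rw [maxFixedPriceRevenue, rpow_def_of_pos (by positivity), one_div (1 + x), log_inv, hratio,
    ← exp_add, logMaxFixedPriceRevenue]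
  congr 1
  field_simp
  ring

lemma hasDerivAt_logMaxFixedPriceRevenue {x : ℝ} (hx : 0 < x) :
    HasDerivAt logMaxFixedPriceRevenue (log (1 + x) / x ^ 2) x := by
  have hlog1 : HasDerivAt (fun t : ℝ => log (1 + t)) (1 + x)⁻¹ x := by
    simpa using ((hasDerivAt_id x).const_add 1).log (by dsimp; linarith)
  have hinv : HasDerivAt (fun t : ℝ => 1 + t⁻¹) (-(x ^ 2)⁻¹) x := by
    simpa using (hasDerivAt_inv hx.ne').const_add 1
  refine ((hasDerivAt_log hx.ne').sub (hinv.mul hlog1)).congr_deriv ?_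
  field_simp
  ring

lemma strictMonoOn_logMaxFixedPriceRevenue :
    StrictMonoOn logMaxFixedPriceRevenue (Ioi 0) := by
  refine strictMonoOn_of_deriv_pos (convex_Ioi 0)
    (fun t ht => (hasDerivAt_logMaxFixedPriceRevenue ht).continuousAt.continuousWithinAt)
    fun t ht => ?_
  rw [interior_Ioi] at ht
  have ht : 0 < t := ht
  have hlog : 0 < log (1 + t) := log_pos (by linarith)
  rw [(hasDerivAt_logMaxFixedPriceRevenue ht).deriv]
  positivity

lemma strictMonoOn_maxFixedPriceRevenue : StrictMonoOn maxFixedPriceRevenue (Ioi 0) := by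
  intro x hx y hy hxy
  rw [← exp_logMaxFixedPriceRevenue hx, ← exp_logMaxFixedPriceRevenue hy]
  exact exp_lt_exp.mpr (strictMonoOn_logMaxFixedPriceRevenue hx hy hxy)

/-- `g x = (x/(1+x)) * (1/(1+x))^(1/x)` is strictly increasing on `(0, ∞)`. -/
theorem stmt_4 (x y : ℝ) (hx : 0 < x) (hxy : x < y) :
    (x / (1 + x)) * (1 / (1 + x)) ^ (1 / x) <
      (y / (1 + y)) * (1 / (1 + y)) ^ (1 / y) :=
  strictMonoOn_maxFixedPriceRevenue hx (hx.trans hxy) hxy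
end

section
/- For natural numbers k > 5, define E_FPDM(k) = (1 - (1/5)^((k-4)/4))·(1/5)^(1/4) + (1/5)^((k-4)/4)·(1 - (1/k)^(4/(k-1)))·(1/k)^(1/(k-1)) and E_opt(k) = (1/(1+k))^(1/k)·(k/(1+k)). Then the ratio E_FPDM(k)/E_opt(k) tends to (1/5)^(1/4) as k tends to infinity. -/
/-!
Both `(1/k)^(a/(k-1))` and `(1/(1+k))^(1/k)` tend to `1`, since `log k / k → 0`, and
`k/(1+k) → 1`, so `E_opt(k) → 1`. In `E_FPDM(k)` the weight `(1/5)^((k-4)/4)` tends to `0`,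
so `E_FPDM(k)` tends to the remaining term `(1/5)^(1/4)`.
-/

open Filter Topology

lemma tendsto_one_div_rpow_div_sub_one (a : ℝ) :
    Tendsto (fun x : ℝ => (1 / x) ^ (a / (x - 1))) atTop (𝓝 1) := by
  refine (tendsto_rpow_div_mul_add (-a) 1 (-1) zero_ne_one).congr' ?_
  filter_upwards [eventually_gt_atTop 0] with x hx
  rw [one_div, Real.inv_rpow hx.le, ← Real.rpow_neg hx.le, neg_div, one_mul, ← sub_eq_add_neg]

/-- With `x = 5` neighbours, the ratio `E_FPDM(k) / E_opt(k)` tends to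
`(1/5)^(1/4)` as `k → ∞`. -/
theorem stmt_11 :
    Filter.Tendsto
      (fun k : ℕ =>
        ((1 - (1 / 5 : ℝ) ^ (((k : ℝ) - 4) / 4)) * (1 / 5 : ℝ) ^ ((1 : ℝ) / 4) +
            (1 / 5 : ℝ) ^ (((k : ℝ) - 4) / 4) *
              (1 - (1 / (k : ℝ)) ^ ((4 : ℝ) / ((k : ℝ) - 1))) *
              (1 / (k : ℝ)) ^ ((1 : ℝ) / ((k : ℝ) - 1))) /
          ((1 / (1 + (k : ℝ))) ^ ((1 : ℝ) / k) * ((k : ℝ) / (1 + (k : ℝ)))))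
      Filter.atTop (nhds ((1 / 5 : ℝ) ^ ((1 : ℝ) / 4))) := by
  have hk : Tendsto (fun k : ℕ => (k : ℝ)) atTop atTop := tendsto_natCast_atTop_atTop
  have hweight : Tendsto (fun k : ℕ => (1 / 5 : ℝ) ^ (((k : ℝ) - 4) / 4)) atTop (𝓝 0) :=
    (tendsto_rpow_atTop_of_base_lt_one _ (by norm_num) (by norm_num)).comp
      ((tendsto_atTop_add_const_right _ _ hk).atTop_div_const (by norm_num))
  have hroot (a : ℝ) : Tendsto (fun k : ℕ => (1 / (k : ℝ)) ^ (a / ((k : ℝ) - 1))) atTop (𝓝 1) :=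
    (tendsto_one_div_rpow_div_sub_one a).comp hk
  have hroot_succ : Tendsto (fun k : ℕ => (1 / (1 + (k : ℝ))) ^ ((1 : ℝ) / k)) atTop (𝓝 1) := by
    simpa only [Function.comp_def, add_sub_cancel_left] using
      (tendsto_one_div_rpow_div_sub_one 1).comp (tendsto_atTop_add_const_left _ 1 hk)
  have hfrac : Tendsto (fun k : ℕ => (k : ℝ) / (1 + (k : ℝ))) atTop (𝓝 1) :=
    (tendsto_natCast_div_add_atTop (1 : ℝ)).congr fun k => by rw [add_comm]
  have hnum := (((tendsto_const_nhds (x := (1 : ℝ))).sub hweight).mul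
      (tendsto_const_nhds (x := (1 / 5 : ℝ) ^ ((1 : ℝ) / 4)))).add
    ((hweight.mul ((tendsto_const_nhds (x := (1 : ℝ))).sub (hroot 4))).mul (hroot 1))
  have hden := hroot_succ.mul hfrac
  simpa [Pi.div_def] using hnum.div hden (mul_ne_zero one_ne_zero one_ne_zero)
end

section
/- Fix an integer x ≥ 2. For natural numbers k > x, define E_FPDM(k) = (1 - (1/x)^((k-x+1)/(x-1)))·(1/x)^(1/(x-1)) + (1/x)^((k-x+1)/(x-1))·(1 - (1/k)^((x-1)/(k-1)))·(1/k)^(1/(k-1)) and E_opt(k) = (1/(1+k))^(1/k)·(k/(1+k)). Then the ratio E_FPDM(k)/E_opt(k) tends to (1/x)^(1/(x-1)) as k tends to infinity. -/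
/-!
The weight `(1/x)^((k-x+1)/(x-1))` decays geometrically, while `(1/t)^(c/(t-d)) = exp (-c log t/(t-d))`
tends to `1`; so `E_FPDM(k) → (1/x)^(1/(x-1))` and `E_opt(k) → 1`.
-/

open Filter Topology

theorem Filter.Tendsto.one_div_rpow_div_sub {α : Type*} {l : Filter α} {f : α → ℝ}
    (hf : Tendsto f l atTop) (c d : ℝ) :
    Tendsto (fun a => (1 / f a) ^ (c / (f a - d))) l (𝓝 1) := by
  have h := ((tendsto_rpow_div_mul_add c 1 (-d) zero_ne_one).inv₀ one_ne_zero).comp hf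
  rw [inv_one] at h
  refine h.congr' ?_
  filter_upwards [hf.eventually_ge_atTop 0] with a ha
  simp [one_div, Real.inv_rpow ha, sub_eq_add_neg]

/-- For a fixed number `x ≥ 2` of neighbours, the ratio `E_FPDM(k) / E_opt(k)`
tends to `(1/x)^(1/(x-1))` as `k → ∞`. -/
theorem stmt_12 (x : ℕ) (hx : 2 ≤ x) :
    Filter.Tendsto
      (fun k : ℕ =>
        ((1 - (1 / (x : ℝ)) ^ (((k : ℝ) - (x : ℝ) + 1) / ((x : ℝ) - 1))) *
              (1 / (x : ℝ)) ^ ((1 : ℝ) / ((x : ℝ) - 1)) +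
            (1 / (x : ℝ)) ^ (((k : ℝ) - (x : ℝ) + 1) / ((x : ℝ) - 1)) *
              (1 - (1 / (k : ℝ)) ^ (((x : ℝ) - 1) / ((k : ℝ) - 1))) *
              (1 / (k : ℝ)) ^ ((1 : ℝ) / ((k : ℝ) - 1))) /
          ((1 / (1 + (k : ℝ))) ^ ((1 : ℝ) / k) * ((k : ℝ) / (1 + (k : ℝ)))))
      Filter.atTop (nhds ((1 / (x : ℝ)) ^ ((1 : ℝ) / ((x : ℝ) - 1)))) := by
  have hx1 : (1 : ℝ) < x := by exact_mod_cast hx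
  have hk := tendsto_natCast_atTop_atTop (R := ℝ)
  have hweight : Tendsto (fun k : ℕ => (1 / (x : ℝ)) ^ (((k : ℝ) - x + 1) / ((x : ℝ) - 1)))
      atTop (𝓝 0) := by
    have hexp : Tendsto (fun k : ℕ => ((k : ℝ) - x + 1) / ((x : ℝ) - 1)) atTop atTop :=
      ((tendsto_atTop_add_const_right _ (1 - (x : ℝ)) hk).atTop_div_const (r := (x : ℝ) - 1)
        (by linarith)).congr fun k => by ring
    exact (tendsto_rpow_atTop_of_base_lt_one _ (neg_one_lt_zero.trans (by positivity))
      ((div_lt_one (by linarith)).2 hx1)).comp hexp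
  have hnum := ((tendsto_const_nhds (x := (1 : ℝ)).sub hweight).mul
      (tendsto_const_nhds (x := (1 / (x : ℝ)) ^ ((1 : ℝ) / ((x : ℝ) - 1))))).add
    ((hweight.mul ((tendsto_const_nhds (x := (1 : ℝ))).sub (hk.one_div_rpow_div_sub (x - 1) 1))).mul
      (hk.one_div_rpow_div_sub 1 1))
  have hden := ((tendsto_atTop_add_const_left _ 1 hk).one_div_rpow_div_sub 1 1).mul
    ((tendsto_natCast_div_add_atTop (1 : ℝ)).congr fun k => by rw [add_comm])
  convert hnum.div hden (by norm_num) using 2 <;> simp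
end

section
/- For every real number x ≥ 2, it holds that (1/x)^(1/(x-1)) ≥ 1/2, with equality exactly at x = 2. -/
/-- For every real `x ≥ 2`, `(1/x)^(1/(x-1)) ≥ 1/2`, with equality
exactly at `x = 2`. -/
theorem stmt_13 (x : ℝ) (hx : 2 ≤ x) :
    (1 / x) ^ (1 / (x - 1)) ≥ 1 / 2 ∧
      ((1 / x) ^ (1 / (x - 1)) = 1 / 2 ↔ x = 2) := by
  have hx0 : (0:ℝ) < x := by linarith
  have hx1 : (0:ℝ) < x - 1 := by linarith
  have hlog2 : (1:ℝ)/2 < Real.log 2 := by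
    have := Real.log_two_gt_d9; linarith
  have h1 : Real.log (x/2) ≤ x/2 - 1 :=
    Real.log_le_sub_one_of_pos (by linarith)
  have h2 : Real.log (x/2) = Real.log x - Real.log 2 := by
    rw [Real.log_div (by linarith) (by norm_num)]
  have key : Real.log x ≤ (x - 1) * Real.log 2 := by nlinarith
  have keystrict : 2 < x → Real.log x < (x - 1) * Real.log 2 := by
    intro hx2; nlinarith
  have hpos : (0:ℝ) < (1/x) ^ (1/(x-1)) := by positivity
  have hlhs : Real.log ((1/x) ^ (1/(x-1))) = -(Real.log x) / (x-1) := by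
    rw [Real.log_rpow (by positivity), one_div x, Real.log_inv]
    ring
  have hloghalf : Real.log (1/2 : ℝ) = -Real.log 2 := by
    rw [one_div, Real.log_inv]
  have hmain : (1/2 : ℝ) ≤ (1/x) ^ (1/(x-1)) := by
    rw [← Real.log_le_log_iff (by norm_num) hpos, hlhs, hloghalf]
    rw [neg_div, neg_le_neg_iff, div_le_iff₀ hx1]
    linarith [key]
  refine ⟨hmain, ⟨?_, ?_⟩⟩
  · intro heq
    by_contra hne
    have hx2 : 2 < x := lt_of_le_of_ne hx (Ne.symm hne)
    have := keystrict hx2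
    have hlogeq : Real.log ((1/x) ^ (1/(x-1))) = Real.log (1/2 : ℝ) := by rw [heq]
    rw [hlhs, hloghalf, neg_div, neg_eq_iff_eq_neg, neg_neg,
      div_eq_iff (ne_of_gt hx1)] at hlogeq
    nlinarith
  · rintro rfl
    norm_num
end
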